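/- Let (X,d) be a strongly geodesic 1-hyperbolic G-space, let V ≤ G be a nontrivial subgroup, and for g ∈ G set l_V(g) = d(X(V), gX(V)). Then for any g₁, g₂ ∈ G with l_V(g₁) ≥ 100 and l_V(g₂) ≥ 100, there exists at most one element v ∈ V such that l_V(g₁ v g₂) ≤ l_V(g₁) + l_V(g₂) − 200. -/

import Mathlib

noncomputable section

namespace KW

open Metric Set Pointwise

variable {X : Type*} [MetricSpace X]

/-- `s` is (the image of) a unit-speed geodesic segment joining `x` to `y`. -/
def IsGeodesicSegment (s : Set X) (x y : X) : Prop :=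
  ∃ (b : ℝ) (f : ℝ → X), 0 ≤ b ∧ f 0 = x ∧ f b = y ∧
    (∀ u ∈ Set.Icc (0 : ℝ) b, ∀ v ∈ Set.Icc (0 : ℝ) b, dist (f u) (f v) = |u - v|) ∧
    s = f '' Set.Icc 0 b

/-- A geodesic metric space. -/
def GeodesicSpace (X : Type*) [MetricSpace X] : Prop :=
  ∀ x y : X, ∃ s : Set X, IsGeodesicSegment s x y

/-- `X` is `δ`-hyperbolic: geodesic, and every geodesic triangle is `δ`-thin. -/
def DeltaHyperbolic (δ : ℝ) (X : Type*) [MetricSpace X] : Prop :=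
  GeodesicSpace X ∧
    ∀ (x y z : X) (s₁ s₂ s₃ : Set X),
      IsGeodesicSegment s₁ x y → IsGeodesicSegment s₂ y z → IsGeodesicSegment s₃ x z →
      ∀ p ∈ s₁, ∃ q ∈ s₂ ∪ s₃, dist p q ≤ δ

/-- `A` is an `ε`-quasiconvex subset of `X`. -/
def Quasiconvex (ε : ℝ) (A : Set X) : Prop :=
  ∀ x ∈ A, ∀ y ∈ A, ∀ s : Set X, IsGeodesicSegment s x y → ∀ p ∈ s, ∃ a ∈ A, dist p a ≤ ε

/-- The Gromov product `(y,z)_x`. -/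
def gromov (x y z : X) : ℝ := (dist y x + dist z x - dist y z) / 2

def IsGeodesicRay (γ : ℝ → X) : Prop :=
  ∀ s t : ℝ, 0 ≤ s → 0 ≤ t → dist (γ s) (γ t) = |s - t|

def IsBiGeodesic (γ : ℝ → X) : Prop :=
  ∀ s t : ℝ, dist (γ s) (γ t) = |s - t|

/-- `A` and `B` are `K`-Hausdorff close. -/
def HClose (K : ℝ) (A B : Set X) : Prop :=
  (∀ a ∈ A, ∃ b ∈ B, dist a b ≤ K) ∧ ∀ b ∈ B, ∃ a ∈ A, dist a b ≤ K

def HausdorffClose (A B : Set X) : Prop := ∃ K : ℝ, HClose K A B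

/-- Two geodesic rays are asymptotic iff their images are Hausdorff close. -/
def Asymptotic (γ γ' : ℝ → X) : Prop :=
  HausdorffClose (γ '' Set.Ici 0) (γ' '' Set.Ici 0)

def GRay (X : Type*) [MetricSpace X] : Type _ := {γ : ℝ → X // IsGeodesicRay γ}

theorem asymptotic_refl (γ : ℝ → X) : Asymptotic γ γ :=
  ⟨0, fun a ha => ⟨a, ha, by simp⟩, fun b hb => ⟨b, hb, by simp⟩⟩

theorem asymptotic_symm {γ γ' : ℝ → X} (h : Asymptotic γ γ') : Asymptotic γ' γ := by
  obtain ⟨K, h₁, h₂⟩ := h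
  refine ⟨K, fun a ha => ?_, fun b hb => ?_⟩
  · obtain ⟨b, hb, hd⟩ := h₂ a ha
    exact ⟨b, hb, by rwa [dist_comm]⟩
  · obtain ⟨a, ha, hd⟩ := h₁ b hb
    exact ⟨a, ha, by rwa [dist_comm]⟩

theorem asymptotic_trans {γ₁ γ₂ γ₃ : ℝ → X} (h : Asymptotic γ₁ γ₂)
    (h' : Asymptotic γ₂ γ₃) : Asymptotic γ₁ γ₃ := by
  obtain ⟨K, h₁, h₂⟩ := h
  obtain ⟨K', h₁', h₂'⟩ := h'
  refine ⟨K + K', fun a ha => ?_, fun c hc => ?_⟩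
  · obtain ⟨b, hb, hab⟩ := h₁ a ha
    obtain ⟨c, hc, hbc⟩ := h₁' b hb
    exact ⟨c, hc, (dist_triangle a b c).trans (by linarith)⟩
  · obtain ⟨b, hb, hbc⟩ := h₂' c hc
    obtain ⟨a, ha, hab⟩ := h₂ b hb
    exact ⟨a, ha, (dist_triangle a b c).trans (by linarith)⟩

def raySetoid (X : Type*) [MetricSpace X] : Setoid (GRay X) where
  r γ γ' := Asymptotic γ.1 γ'.1
  iseqv := ⟨fun γ => asymptotic_refl γ.1, fun h => asymptotic_symm h,
    fun h h' => asymptotic_trans h h'⟩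

/-- The (geodesic) boundary of `X`: asymptoty classes of geodesic rays. -/
def Boundary (X : Type*) [MetricSpace X] : Type _ := Quotient (raySetoid X)

def Boundary.mk {X : Type*} [MetricSpace X] (γ : GRay X) : Boundary X :=
  Quotient.mk (raySetoid X) γ

/-- A strongly geodesic metric space. -/
def StronglyGeodesic (X : Type*) [MetricSpace X] : Prop :=
  GeodesicSpace X ∧
  (∀ γ : ℝ → X, IsGeodesicRay γ → ∀ y : X,
      ∃ γ' : ℝ → X, IsGeodesicRay γ' ∧ γ' 0 = y ∧ Asymptotic γ γ') ∧
  (∀ γ₁ γ₂ : ℝ → X, IsGeodesicRay γ₁ → IsGeodesicRay γ₂ → γ₁ 0 = γ₂ 0 →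
      ¬ Asymptotic γ₁ γ₂ →
      ∃ γ : ℝ → X, IsBiGeodesic γ ∧
        HausdorffClose (Set.range γ) (γ₁ '' Set.Ici 0 ∪ γ₂ '' Set.Ici 0)) ∧
  (∀ (x : X) (u : ℕ → X),
      (∀ M : ℝ, ∃ N : ℕ, ∀ n, N ≤ n → ∀ m, N ≤ m → M ≤ gromov x (u n) (u m)) →
      ∃ γ : ℝ → X, IsGeodesicRay γ ∧ γ 0 = x ∧
        ∀ M : ℝ, ∃ N : ℕ, ∀ n, N ≤ n → ∀ m, N ≤ m → M ≤ gromov x (γ (n : ℝ)) (u m))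

/-- The sequence `u` converges to the boundary point `p`, with basepoint `x`. -/
def SeqConvTo (x : X) (u : ℕ → X) (p : Boundary X) : Prop :=
  ∃ γ : GRay X, Boundary.mk γ = p ∧
    ∀ M : ℝ, ∃ N : ℕ, ∀ n, N ≤ n → ∀ m, N ≤ m → M ≤ gromov x (u n) (γ.1 (m : ℝ))

/-- `γ` is a geodesic ray in the class of the boundary point `p`. -/
def RayTo (γ : ℝ → X) (p : Boundary X) : Prop :=
  ∃ h : IsGeodesicRay γ, Boundary.mk ⟨γ, h⟩ = p

/-- `γ` is a biinfinite geodesic whose two ends converge to `p` and `q`. -/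
def BiGeodesicJoins (γ : ℝ → X) (p q : Boundary X) : Prop :=
  IsBiGeodesic γ ∧ SeqConvTo (γ 0) (fun n => γ (-(n : ℝ))) p ∧
    SeqConvTo (γ 0) (fun n => γ (n : ℝ)) q

/-- `s` is (the image of) a geodesic joining two points of `X ∪ ∂X`. -/
def JoinSet : X ⊕ Boundary X → X ⊕ Boundary X → Set X → Prop
  | Sum.inl x, Sum.inl y, s => IsGeodesicSegment s x y
  | Sum.inl x, Sum.inr p, s => ∃ γ : ℝ → X, γ 0 = x ∧ RayTo γ p ∧ s = γ '' Set.Ici 0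
  | Sum.inr p, Sum.inl x, s => ∃ γ : ℝ → X, γ 0 = x ∧ RayTo γ p ∧ s = γ '' Set.Ici 0
  | Sum.inr p, Sum.inr q, s => ∃ γ : ℝ → X, BiGeodesicJoins γ p q ∧ s = Set.range γ

/-- The convex hull `Conv(A)` of a subset `A ⊆ X ∪ ∂X`. -/
def geoConv (A : Set (X ⊕ Boundary X)) : Set X :=
  {x | (∃ a : X, A = {Sum.inl a} ∧ x = a) ∨
    ∃ p ∈ A, ∃ q ∈ A, p ≠ q ∧ ∃ s : Set X, JoinSet p q s ∧ x ∈ s}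

/-- The distance between two subsets of `X`. -/
def setDist (A B : Set X) : ℝ := sInf (Set.image2 dist A B)

/-- `a` is a projection of `p` on `A` (relative to `δ`). -/
def IsProjection (δ : ℝ) (A : Set X) (p a : X) : Prop :=
  a ∈ A ∧ ∀ a' ∈ A, dist p a ≤ dist p a' + δ

/-- `f` restricted to `[0,L]` is a unit-speed geodesic from `x` to `y`. -/
def GeodParam (f : ℝ → X) (L : ℝ) (x y : X) : Prop :=
  0 ≤ L ∧ f 0 = x ∧ f L = y ∧
    ∀ u ∈ Set.Icc (0 : ℝ) L, ∀ v ∈ Set.Icc (0 : ℝ) L, dist (f u) (f v) = |u - v|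

/-- Concatenation of three paths, the first on `[0,a]`, the second on `[0,b]`. -/
def concat3 (f₁ f₂ f₃ : ℝ → X) (a b : ℝ) : ℝ → X := fun t =>
  if t ≤ a then f₁ t else if t ≤ a + b then f₂ (t - a) else f₃ (t - a - b)

/-- `f` is a `(lam, ε)`-quasigeodesic on `[a,b]`. -/
def QuasigeodesicOn (lam ε : ℝ) (f : ℝ → X) (a b : ℝ) : Prop :=
  ∀ s ∈ Set.Icc a b, ∀ t ∈ Set.Icc a b, |s - t| ≤ lam * dist (f s) (f t) + ε

/-- The action of `G` on `X` is by isometries. -/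
def IsometricAction (G Y : Type*) [Group G] [MetricSpace Y] [MulAction G Y] : Prop :=
  ∀ (g : G) (x y : Y), dist (g • x) (g • y) = dist x y

section GroupAction

variable {G : Type*} [Group G]

/-- The limit set `Λ(U) ⊆ ∂X` of a subgroup `U ≤ G`. -/
def limitSet (X : Type*) [MetricSpace X] [MulAction G X] (U : Subgroup G) :
    Set (Boundary X) :=
  {p | ∃ x₀ : X, ∃ u : ℕ → U, SeqConvTo x₀ (fun n => ((u n : G)) • x₀) p}

/-- The small displacement set `E(U)` (relative to `δ`). -/
def smallDispSet (X : Type*) [MetricSpace X] [MulAction G X] (δ : ℝ) (U : Subgroup G) :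
    Set X :=
  {x | ∃ u : G, u ∈ U ∧ u ≠ 1 ∧ dist x (u • x) ≤ 100 * δ}

/-- `Z(U) = Conv(Λ(U) ∪ E(U))`. -/
def ZSet (X : Type*) [MetricSpace X] [MulAction G X] (δ : ℝ) (U : Subgroup G) : Set X :=
  geoConv (Sum.inr '' limitSet X U ∪ Sum.inl '' smallDispSet X δ U)

/-- The convex hull `X(U)`: the closure of `Conv(Z(U))`. -/
def cHull (X : Type*) [MetricSpace X] [MulAction G X] (δ : ℝ) (U : Subgroup G) : Set X :=
  closure (geoConv (Sum.inl '' ZSet X δ U))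

/-- The weak convex hull `X_U = Conv(Λ(U))`. -/
def weakHull (X : Type*) [MetricSpace X] [MulAction G X] (U : Subgroup G) : Set X :=
  geoConv (Sum.inr '' limitSet X U)

/-- `l_V(g) = d(X(V), gX(V))`. -/
def lV (X : Type*) [MetricSpace X] [MulAction G X] (δ : ℝ) (V : Subgroup G) (g : G) : ℝ :=
  setDist (cHull X δ V) (g • cHull X δ V)

/-- The translation length of `g`. -/
def translationLength (X : Type*) [MetricSpace X] [MulAction G X] (g : G) : ℝ :=
  sInf (Set.range fun x : X => dist x (g • x))

/-- The asymptotic translation length of `g`. -/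
def asympTranslationLength (X : Type*) [MetricSpace X] [MulAction G X] (g : G) : ℝ :=
  Filter.liminf (fun n : ℕ => translationLength X (g ^ n) / (n : ℝ)) Filter.atTop

/-- An elementary move between `G`-tuples `(U₁,…,U_n; h₁,…,h_m)`. -/
def gMove {n m : ℕ} (M M' : (Fin n → Subgroup G) × (Fin m → G)) : Prop :=
  (M'.2 = M.2 ∧ ∃ (j : Fin n) (g : G),
      g ∈ Subgroup.closure (Set.range M.2 ∪ ⋃ i ∈ {i : Fin n | i ≠ j}, ((M.1 i : Set G))) ∧
      (∀ i, i ≠ j → M'.1 i = M.1 i) ∧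
      M'.1 j = Subgroup.map (MulAut.conj g).toMonoidHom (M.1 j)) ∨
  (M'.1 = M.1 ∧ ∃ (i : Fin m) (g₁ g₂ : G),
      g₁ ∈ Subgroup.closure (M.2 '' {j : Fin m | j ≠ i} ∪ ⋃ t, ((M.1 t : Set G))) ∧
      g₂ ∈ Subgroup.closure (M.2 '' {j : Fin m | j ≠ i} ∪ ⋃ t, ((M.1 t : Set G))) ∧
      (∀ j, j ≠ i → M'.2 j = M.2 j) ∧
      M'.2 i = g₁ * M.2 i * g₂)

/-- Equivalence of `G`-tuples: a finite chain of elementary moves. -/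
def gEquiv {n m : ℕ} :
    (Fin n → Subgroup G) × (Fin m → G) → (Fin n → Subgroup G) × (Fin m → G) → Prop :=
  Relation.ReflTransGen gMove

/-- The family of factors `U₁,…,U_n, F(h₁),…,F(h_m)`. -/
def FF {n : ℕ} (m : ℕ) (U : Fin n → Subgroup G) : Fin n ⊕ Fin m → Type _
  | Sum.inl j => ↥(U j)
  | Sum.inr _ => FreeGroup PUnit

instance ffGroup {n : ℕ} (m : ℕ) (U : Fin n → Subgroup G) :
    (i : Fin n ⊕ Fin m) → Group (FF m U i)
  | Sum.inl j => inferInstanceAs (Group ↥(U j))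
  | Sum.inr _ => inferInstanceAs (Group (FreeGroup PUnit))

def ffHoms {n m : ℕ} (U : Fin n → Subgroup G) (H : Fin m → G) :
    (i : Fin n ⊕ Fin m) → FF m U i →* G
  | Sum.inl j => (U j).subtype
  | Sum.inr j => FreeGroup.lift fun _ => H j

/-- The canonical homomorphism `U₁ ∗ ⋯ ∗ U_n ∗ F(H) → G`. -/
def freeProdHom {n m : ℕ} (U : Fin n → Subgroup G) (H : Fin m → G) :
    Monoid.CoprodI (FF m U) →* G :=
  Monoid.CoprodI.lift (ffHoms U H)

/-- `W = U₁ ∗ ⋯ ∗ U_n ∗ F(H)`: the canonical homomorphism is injective with image `W`. -/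
def IsFreeProdDecomp {n m : ℕ} (U : Fin n → Subgroup G) (H : Fin m → G)
    (W : Subgroup G) : Prop :=
  Function.Injective (freeProdHom U H) ∧ (freeProdHom U H).range = W

/-- Minimality of the `G`-pair `(V; H)` (relative to a `1`-hyperbolic `G`-space `X`). -/
def PairMinimal (X : Type*) [MetricSpace X] [MulAction G X] {m : ℕ}
    (V : Subgroup G) (H : Fin m → G) : Prop :=
  ∀ (V' : Subgroup G) (H' : Fin m → G),
    gEquiv ((fun _ : Fin 1 => V), H) ((fun _ : Fin 1 => V'), H') →
    (∑ i, lV X 1 V (H i)) ≤ (∑ i, lV X 1 V' (H' i)) + 1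

/-- An elementary Nielsen move on tuples of elements of `G`. -/
def NielsenMove {k : ℕ} (g g' : Fin k → G) : Prop :=
  (∃ i : Fin k, (∀ j, j ≠ i → g' j = g j) ∧ g' i = (g i)⁻¹) ∨
  (∃ i j : Fin k, i ≠ j ∧ (∀ t, t ≠ i → g' t = g t) ∧ g' i = g i * g j) ∨
  (∃ i j : Fin k, i ≠ j ∧ g' = g ∘ Equiv.swap i j)

/-- Nielsen equivalence: a finite chain of elementary Nielsen moves. -/
def NielsenEq {k : ℕ} : (Fin k → G) → (Fin k → G) → Prop :=
  Relation.ReflTransGen NielsenMove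

/-- Word length of `g` with respect to the (symmetrized) generating set `S`. -/
def wordLength (S : Set G) (g : G) : ℕ :=
  sInf {n : ℕ | ∃ f : Fin n → G, (∀ i, f i ∈ S ∨ (f i)⁻¹ ∈ S) ∧ (List.ofFn f).prod = g}

/-- `(X, ι)` is a model of the Cayley graph `Γ(G,S)`. -/
def IsCayleyGraph (G : Type*) [Group G] (S : Set G) (X : Type*) [MetricSpace X]
    [MulAction G X] (ι : G → X) : Prop :=
  IsometricAction G X ∧
  (∀ g h : G, ι (g * h) = g • ι h) ∧
  Function.Injective ι ∧
  GeodesicSpace X ∧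
  (∀ g h : G, dist (ι g) (ι h) = (wordLength S (g⁻¹ * h) : ℝ)) ∧
  ∀ x : X, ∃ g h : G, wordLength S (g⁻¹ * h) ≤ 1 ∧
    ∃ s : Set X, IsGeodesicSegment s (ι g) (ι h) ∧ x ∈ s

/-- `H` is a quasiconvex subgroup (with respect to the Cayley graph model `(X, ι)`). -/
def QCSubgroup (X : Type*) [MetricSpace X] (ι : G → X) (H : Subgroup G) : Prop :=
  ∃ ε : ℝ, 0 ≤ ε ∧ Quasiconvex ε (ι '' (H : Set G))

end GroupAction

/-- Every nontrivial element of finite order has finite centralizer. -/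
def AlmostTorsionFree (G : Type*) [Group G] : Prop :=
  ∀ g : G, g ≠ 1 → IsOfFinOrder g → ((Subgroup.centralizer {g} : Subgroup G) : Set G).Finite

/-- `U` is nontrivial and admits no nontrivial free product decomposition. -/
def FreelyIndecomposable (U : Type*) [Group U] : Prop :=
  Nontrivial U ∧
    ¬ ∃ A B : Subgroup U, A ≠ ⊥ ∧ B ≠ ⊥ ∧
        Function.Bijective (Monoid.Coprod.lift A.subtype B.subtype)

def InfiniteCyclic (U : Type*) [Group U] : Prop := Infinite U ∧ IsCyclic U

def VirtuallyCyclic (U : Type*) [Group U] : Prop :=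
  ∃ H : Subgroup U, H.index ≠ 0 ∧ IsCyclic ↥H

def NonElementary (U : Type*) [Group U] : Prop := ¬ Finite U ∧ ¬ VirtuallyCyclic U

end KW

universe u v

namespace KW

open Pointwise Metric Set

/-!
Take short bridges `α` from `X(V)` to `g₁ X(V)` and `β` from `X(V)` to `g₂ X(V)`, of lengths at
most `l_V(g₁) + 1` and `l_V(g₂) + 1`, with endpoints in `Conv(Z(V))`, which is `2`-quasiconvex
and `V`-invariant. If `g₁ u g₂` is short for some `u ∈ V`, then `α`, `g₁ u β` and a short bridge
for `g₁ u g₂` close up to a thin geodesic hexagon whose remaining sides stay near `g₁ X(V)`,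
`g₁ u g₂ X(V)` or `X(V)`, hence far from the point of `α` at distance `50` from its end; so that
point lies within `9` of `g₁ u β(50)`. For two such elements `v, w` the point `β(50)` is moved at
most `18` by `v⁻¹ w`. If `v ≠ w` it therefore lies in `E(V) ⊆ X(V)`, although its distance to
`g₂ X(V)` is less than `l_V(g₂)`.
-/

section Segments

variable {X : Type*} [MetricSpace X] {s : Set X} {x y : X}

lemma IsGeodesicSegment.exists_geodParam (h : IsGeodesicSegment s x y) :
    ∃ f : ℝ → X, GeodParam f (dist x y) x y ∧ s = f '' Icc 0 (dist x y) := by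
  obtain ⟨b, f, hb, h0, hb', hisom, rfl⟩ := h
  have hd : dist x y = b := by
    rw [← h0, ← hb', hisom 0 ⟨le_rfl, hb⟩ b ⟨hb, le_rfl⟩, zero_sub, abs_neg, abs_of_nonneg hb]
  rw [hd]
  exact ⟨f, ⟨hb, h0, hb', hisom⟩, rfl⟩

lemma GeodesicSpace.exists_geodParam (hgeo : GeodesicSpace X) (x y : X) :
    ∃ f : ℝ → X, GeodParam f (dist x y) x y :=
  let ⟨_, hs⟩ := hgeo x y
  let ⟨f, hf, _⟩ := hs.exists_geodParam
  ⟨f, hf⟩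

namespace GeodParam

variable {f : ℝ → X} {L t : ℝ}

lemma isGeodesicSegment (h : GeodParam f L x y) : IsGeodesicSegment (f '' Icc 0 L) x y :=
  ⟨L, f, h.1, h.2.1, h.2.2.1, h.2.2.2, rfl⟩

lemma dist_left (h : GeodParam f L x y) (ht : t ∈ Icc 0 L) : dist (f t) x = t := by
  rw [← h.2.1, h.2.2.2 t ht 0 ⟨le_rfl, h.1⟩, sub_zero, abs_of_nonneg ht.1]

lemma dist_right (h : GeodParam f L x y) (ht : t ∈ Icc 0 L) : dist (f t) y = L - t := by
  rw [← h.2.2.1, h.2.2.2 t ht L ⟨h.1, le_rfl⟩, abs_sub_comm, abs_of_nonneg (sub_nonneg.2 ht.2)]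

lemma dist_eq (h : GeodParam f L x y) : dist x y = L := by
  simpa [h.2.2.1, dist_comm] using h.dist_left ⟨h.1, le_rfl⟩

end GeodParam

namespace IsGeodesicSegment

lemma left_mem (h : IsGeodesicSegment s x y) : x ∈ s := by
  obtain ⟨f, hf, rfl⟩ := h.exists_geodParam
  exact ⟨0, ⟨le_rfl, hf.1⟩, hf.2.1⟩

lemma dist_add_dist_of_mem (h : IsGeodesicSegment s x y) {r : X} (hr : r ∈ s) :
    dist x r + dist r y = dist x y := by
  obtain ⟨f, hf, rfl⟩ := h.exists_geodParam
  obtain ⟨t, ht, rfl⟩ := hr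
  rw [dist_comm, hf.dist_left ht, hf.dist_right ht]
  ring

lemma gromov_le_dist (h : IsGeodesicSegment s x y) {r : X} (hr : r ∈ s) (z : X) :
    gromov z x y ≤ dist z r := by
  unfold gromov
  linarith [h.dist_add_dist_of_mem hr, dist_triangle x r z, dist_triangle y r z, dist_comm r y,
    dist_comm z r]

lemma exists_subsegment_right (h : IsGeodesicSegment s x y) {p : X} (hp : p ∈ s) :
    ∃ s' : Set X, IsGeodesicSegment s' p y ∧ s' ⊆ s := by
  obtain ⟨f, hf, rfl⟩ := h.exists_geodParam
  obtain ⟨t, ht, rfl⟩ := hp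
  refine ⟨(fun u => f (t + u)) '' Icc 0 (dist x y - t), ⟨dist x y - t, fun u => f (t + u),
    by linarith [ht.2], by simp, by simp [hf.2.2.1], fun u hu v hv => ?_, rfl⟩, ?_⟩
  · rw [hf.2.2.2 (t + u) ⟨by linarith [hu.1, ht.1], by linarith [hu.2]⟩
      (t + v) ⟨by linarith [hv.1, ht.1], by linarith [hv.2]⟩, add_sub_add_left_eq_sub]
  · rintro _ ⟨u, hu, rfl⟩
    exact ⟨t + u, ⟨by linarith [hu.1, ht.1], by linarith [hu.2]⟩, rfl⟩

end IsGeodesicSegment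

end Segments

section Thin

variable {X : Type*} [MetricSpace X] {δ ε ε' : ℝ} {S A : Set X}

def CloseTo (ε : ℝ) (S A : Set X) : Prop := ∀ p ∈ S, ∃ a ∈ A, dist p a ≤ ε

lemma closeTo_zero_of_subset (h : S ⊆ A) : CloseTo 0 S A :=
  fun p hp => ⟨p, h hp, (dist_self p).le⟩

lemma CloseTo.mono (h : CloseTo ε S A) (hε : ε ≤ ε') : CloseTo ε' S A :=
  fun p hp =>
    let ⟨a, ha, hd⟩ := h p hp
    ⟨a, ha, hd.trans hε⟩

lemma CloseTo.sub_le_dist (h : CloseTo ε S A) {m : X} {R : ℝ} (hm : ∀ a ∈ A, R ≤ dist m a)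
    {q : X} (hq : q ∈ S) : R - ε ≤ dist m q := by
  obtain ⟨a, ha, hd⟩ := h q hq
  linarith [hm a ha, dist_triangle m q a]

lemma DeltaHyperbolic.nonneg (hhyp : DeltaHyperbolic δ X) (x : X) : 0 ≤ δ := by
  obtain ⟨s, hs⟩ := hhyp.1 x x
  obtain ⟨q, hq, hd⟩ := hhyp.2 x x x s s s hs hs hs x hs.left_mem
  exact dist_nonneg.trans hd

lemma DeltaHyperbolic.closeTo_of_triangle (hhyp : DeltaHyperbolic δ X) {x y z : X}
    {s₁ s₂ s₃ : Set X} (h₁ : IsGeodesicSegment s₁ x y) (h₂ : IsGeodesicSegment s₂ y z)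
    (h₃ : IsGeodesicSegment s₃ x z) (hs₂ : CloseTo ε s₂ A) (hs₃ : CloseTo ε s₃ A) :
    CloseTo (ε + δ) s₁ A := by
  intro p hp
  obtain ⟨q, hq, hpq⟩ := hhyp.2 x y z s₁ s₂ s₃ h₁ h₂ h₃ p hp
  obtain ⟨a, ha, hqa⟩ := hq.elim (hs₂ q) (hs₃ q)
  exact ⟨a, ha, by linarith [dist_triangle p q a]⟩

lemma DeltaHyperbolic.closeTo_of_hexagon (hhyp : DeltaHyperbolic δ X)
    {x₀ x₁ x₂ x₃ x₄ x₅ : X} {s₀ s₁ s₂ s₃ s₄ s₅ : Set X}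
    (h₀ : IsGeodesicSegment s₀ x₀ x₁) (h₁ : IsGeodesicSegment s₁ x₁ x₂)
    (h₂ : IsGeodesicSegment s₂ x₂ x₃) (h₃ : IsGeodesicSegment s₃ x₃ x₄)
    (h₄ : IsGeodesicSegment s₄ x₄ x₅) (h₅ : IsGeodesicSegment s₅ x₀ x₅) :
    CloseTo (4 * δ) s₀ (s₁ ∪ s₂ ∪ s₃ ∪ s₄ ∪ s₅) := by
  intro p hp
  have hδ := hhyp.nonneg p
  set A := s₁ ∪ s₂ ∪ s₃ ∪ s₄ ∪ s₅
  have side : ∀ s ⊆ A, ∀ ε, 0 ≤ ε → CloseTo ε s A := fun s hs ε hε =>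
    (closeTo_zero_of_subset hs).mono hε
  obtain ⟨d₄, hd₄⟩ := hhyp.1 x₀ x₄
  obtain ⟨d₃, hd₃⟩ := hhyp.1 x₀ x₃
  obtain ⟨d₂, hd₂⟩ := hhyp.1 x₀ x₂
  have c₄ := hhyp.closeTo_of_triangle hd₄ h₄ h₅ (side s₄ (by intro; simp_all [A]) 0 le_rfl)
    (side s₅ (by intro; simp_all [A]) 0 le_rfl)
  have c₃ := hhyp.closeTo_of_triangle hd₃ h₃ hd₄
    (side s₃ (by intro; simp_all [A]) _ (by simpa)) c₄
  have c₂ := hhyp.closeTo_of_triangle hd₂ h₂ hd₃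
    (side s₂ (by intro; simp_all [A]) _ (by linarith)) c₃
  have c₀ := hhyp.closeTo_of_triangle h₀ h₁ hd₂
    (side s₁ (by intro; simp_all [A]) _ (by linarith)) c₂
  exact (c₀.mono (by linarith)) p hp

end Thin

section Equivariance

variable {G X : Type*} [Group G] [MetricSpace X] [MulAction G X] {s : Set X} {x y : X}

lemma IsometricAction.isometry (hiso : IsometricAction G X) (g : G) :
    Isometry (fun x : X => g • x) :=
  Isometry.of_dist_eq (hiso g)

lemma IsGeodesicSegment.smul (hiso : IsometricAction G X) (g : G)
    (h : IsGeodesicSegment s x y) : IsGeodesicSegment (g • s) (g • x) (g • y) := by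
  obtain ⟨b, f, hb, h0, hb', hisom, rfl⟩ := h
  refine ⟨b, fun t => g • f t, hb, by simp only [h0], by simp only [hb'],
    fun u hu v hv => (hiso g _ _).trans (hisom u hu v hv), ?_⟩
  rw [← Set.image_smul, Set.image_image]

lemma GeodParam.smul (hiso : IsometricAction G X) (g : G) {f : ℝ → X} {L : ℝ}
    (h : GeodParam f L x y) : GeodParam (fun t => g • f t) L (g • x) (g • y) :=
  ⟨h.1, by simp only [h.2.1], by simp only [h.2.2.1],
    fun u hu v hv => (hiso g _ _).trans (h.2.2.2 u hu v hv)⟩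

lemma Quasiconvex.smul (hiso : IsometricAction G X) {ε : ℝ} {A : Set X} (h : Quasiconvex ε A)
    (g : G) : Quasiconvex ε (g • A) := by
  rintro _ ⟨x, hx, rfl⟩ _ ⟨y, hy, rfl⟩ s hs p hp
  have hs' := hs.smul hiso g⁻¹
  rw [inv_smul_smul, inv_smul_smul] at hs'
  obtain ⟨a, ha, hd⟩ := h x hx y hy _ hs' (g⁻¹ • p) (Set.smul_mem_smul_set hp)
  refine ⟨g • a, Set.smul_mem_smul_set ha, ?_⟩
  rwa [← hiso g, smul_inv_smul] at hd

lemma IsGeodesicRay.smul (hiso : IsometricAction G X) (g : G) {γ : ℝ → X}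
    (h : IsGeodesicRay γ) : IsGeodesicRay (fun t => g • γ t) :=
  fun s t hs ht => (hiso g _ _).trans (h s t hs ht)

lemma HClose.smul (hiso : IsometricAction G X) (g : G) {K : ℝ} {A B : Set X}
    (h : HClose K A B) : HClose K (g • A) (g • B) := by
  refine ⟨?_, ?_⟩
  · rintro _ ⟨a, ha, rfl⟩
    obtain ⟨b, hb, hd⟩ := h.1 a ha
    exact ⟨g • b, Set.smul_mem_smul_set hb, (hiso g a b).trans_le hd⟩
  · rintro _ ⟨b, hb, rfl⟩
    obtain ⟨a, ha, hd⟩ := h.2 b hb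
    exact ⟨g • a, Set.smul_mem_smul_set ha, (hiso g a b).trans_le hd⟩

lemma Asymptotic.smul (hiso : IsometricAction G X) (g : G) {γ γ' : ℝ → X}
    (h : Asymptotic γ γ') : Asymptotic (fun t => g • γ t) (fun t => g • γ' t) := by
  obtain ⟨K, hK⟩ := h
  refine ⟨K, ?_⟩
  rw [← Set.image_image (g • ·) γ, ← Set.image_image (g • ·) γ', Set.image_smul, Set.image_smul]
  exact hK.smul hiso g

def GRay.smul (hiso : IsometricAction G X) (g : G) (γ : GRay X) : GRay X :=
  ⟨fun t => g • γ.1 t, γ.2.smul hiso g⟩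

def Boundary.smul (hiso : IsometricAction G X) (g : G) : Boundary X → Boundary X :=
  Quotient.lift (fun γ => Boundary.mk (γ.smul hiso g))
    (fun _ _ h => Quotient.sound (Asymptotic.smul hiso g h))

lemma Boundary.inv_smul_smul (hiso : IsometricAction G X) (g : G) (p : Boundary X) :
    Boundary.smul hiso g⁻¹ (Boundary.smul hiso g p) = p := by
  induction p using Quotient.ind with
  | _ γ =>
    exact congrArg Boundary.mk (Subtype.ext (funext fun t => _root_.inv_smul_smul g (γ.1 t)))

lemma gromov_smul (hiso : IsometricAction G X) (g : G) (x y z : X) :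
    gromov (g • x) (g • y) (g • z) = gromov x y z := by
  unfold gromov
  rw [hiso, hiso, hiso]

lemma SeqConvTo.smul (hiso : IsometricAction G X) (g : G) {x : X} {u : ℕ → X}
    {p : Boundary X} (h : SeqConvTo x u p) :
    SeqConvTo (g • x) (fun n => g • u n) (Boundary.smul hiso g p) := by
  obtain ⟨γ, rfl, hγ⟩ := h
  refine ⟨γ.smul hiso g, rfl, fun M => ?_⟩
  obtain ⟨N, hN⟩ := hγ M
  exact ⟨N, fun n hn m hm => (gromov_smul hiso g _ _ _).symm ▸ hN n hn m hm⟩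

lemma RayTo.smul (hiso : IsometricAction G X) (g : G) {γ : ℝ → X} {p : Boundary X}
    (h : RayTo γ p) : RayTo (fun t => g • γ t) (Boundary.smul hiso g p) := by
  obtain ⟨hray, rfl⟩ := h
  exact ⟨hray.smul hiso g, rfl⟩

def extSmul (hiso : IsometricAction G X) (g : G) : X ⊕ Boundary X → X ⊕ Boundary X :=
  Sum.map (g • ·) (Boundary.smul hiso g)

lemma extSmul_inv_smul (hiso : IsometricAction G X) (g : G) (a : X ⊕ Boundary X) :
    extSmul hiso g⁻¹ (extSmul hiso g a) = a := by
  cases a <;> simp [extSmul, Boundary.inv_smul_smul]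

lemma JoinSet.smul (hiso : IsometricAction G X) (g : G) {p q : X ⊕ Boundary X} {s : Set X}
    (h : JoinSet p q s) : JoinSet (extSmul hiso g p) (extSmul hiso g q) (g • s) := by
  match p, q with
  | Sum.inl x, Sum.inl y => exact IsGeodesicSegment.smul hiso g h
  | Sum.inl x, Sum.inr P | Sum.inr P, Sum.inl x =>
    obtain ⟨γ, h0, hray, rfl⟩ := h
    exact ⟨fun t => g • γ t, by simp only [h0], hray.smul hiso g,
      by rw [← Set.image_smul, Set.image_image]⟩
  | Sum.inr P, Sum.inr Q =>
    obtain ⟨γ, ⟨hbi, hP, hQ⟩, rfl⟩ := h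
    refine ⟨fun t => g • γ t, ⟨fun s t => (hiso g _ _).trans (hbi s t), hP.smul hiso g,
      hQ.smul hiso g⟩, ?_⟩
    rw [← Set.image_smul, ← Set.range_comp]
    rfl

lemma smul_mem_geoConv (hiso : IsometricAction G X) (g : G) {A : Set (X ⊕ Boundary X)}
    (hx : x ∈ geoConv A) : g • x ∈ geoConv (extSmul hiso g '' A) := by
  rcases hx with ⟨a, rfl, rfl⟩ | ⟨p, hp, q, hq, hpq, s, hs, hxs⟩
  · exact Or.inl ⟨g • x, by simp [extSmul], rfl⟩
  · refine Or.inr ⟨_, Set.mem_image_of_mem _ hp, _, Set.mem_image_of_mem _ hq, fun h => hpq ?_,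
      g • s, hs.smul hiso g, Set.smul_mem_smul_set hxs⟩
    simpa only [extSmul_inv_smul] using congrArg (extSmul hiso g⁻¹) h

end Equivariance

section Hull

variable {X : Type*} [MetricSpace X] {Z : Set X} {x z₁ z₂ : X} {s : Set X}

lemma subset_geoConv_inl (hgeo : GeodesicSpace X) (Z : Set X) : Z ⊆ geoConv (Sum.inl '' Z) := by
  intro a ha
  by_cases hZ : ∀ z ∈ Z, z = a
  · refine Or.inl ⟨a, Set.eq_singleton_iff_unique_mem.2 ⟨⟨a, ha, rfl⟩, ?_⟩, rfl⟩
    rintro _ ⟨z, hz, rfl⟩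
    rw [hZ z hz]
  · push Not at hZ
    obtain ⟨z, hz, hza⟩ := hZ
    obtain ⟨s, hs⟩ := hgeo a z
    exact Or.inr ⟨Sum.inl a, ⟨a, ha, rfl⟩, Sum.inl z, ⟨z, hz, rfl⟩,
      fun h => hza (Sum.inl.inj h).symm, s, hs, hs.left_mem⟩

lemma IsGeodesicSegment.subset_geoConv_inl (hgeo : GeodesicSpace X) (h₁ : z₁ ∈ Z) (h₂ : z₂ ∈ Z)
    (hs : IsGeodesicSegment s z₁ z₂) : s ⊆ geoConv (Sum.inl '' Z) := by
  intro p hp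
  by_cases hz : z₁ = z₂
  · subst hz
    obtain ⟨f, hf, rfl⟩ := hs.exists_geodParam
    obtain ⟨t, ht, rfl⟩ := hp
    obtain rfl : t = 0 := le_antisymm (by simpa using ht.2) ht.1
    rw [hf.2.1]
    exact subset_geoConv_inl hgeo Z h₁
  · exact Or.inr ⟨Sum.inl z₁, ⟨z₁, h₁, rfl⟩, Sum.inl z₂, ⟨z₂, h₂, rfl⟩,
      fun h => hz (Sum.inl.inj h), s, hs, hp⟩

lemma exists_segment_of_mem_geoConv_inl (hgeo : GeodesicSpace X)
    (hx : x ∈ geoConv (Sum.inl '' Z)) :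
    ∃ z ∈ Z, ∃ s : Set X, IsGeodesicSegment s x z ∧ s ⊆ geoConv (Sum.inl '' Z) := by
  rcases hx with ⟨a, hZ, rfl⟩ | ⟨_, ⟨z₁, hz₁, rfl⟩, _, ⟨z₂, hz₂, rfl⟩, -, s, hs, hxs⟩
  · have hx : x ∈ Z := by
      obtain ⟨w, hw, hwx⟩ : Sum.inl x ∈ Sum.inl '' Z := hZ ▸ Set.mem_singleton _
      exact Sum.inl_injective hwx ▸ hw
    obtain ⟨s, hs⟩ := hgeo x x
    exact ⟨x, hx, s, hs, hs.subset_geoConv_inl hgeo hx hx⟩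
  · obtain ⟨s', hs', hsub⟩ := hs.exists_subsegment_right hxs
    exact ⟨z₂, hz₂, s', hs', hsub.trans (hs.subset_geoConv_inl hgeo hz₁ hz₂)⟩

/-- Join `p ∈ [x, y]` to the hull through the triangles `(x, y, z_y)` and `(x, z_y, z_x)`,
where `[y, z_y]` and `[x, z_x]` are geodesics of the hull. -/
lemma quasiconvex_geoConv_inl {δ : ℝ} (hhyp : DeltaHyperbolic δ X) (Z : Set X) :
    Quasiconvex (2 * δ) (geoConv (Sum.inl '' Z)) := by
  intro x hx y hy s hs p hp
  have hδ := hhyp.nonneg p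
  obtain ⟨zy, hzy, σy, hσy, hσyC⟩ := exists_segment_of_mem_geoConv_inl hhyp.1 hy
  obtain ⟨zx, hzx, σx, hσx, hσxC⟩ := exists_segment_of_mem_geoConv_inl hhyp.1 hx
  obtain ⟨T, hT⟩ := hhyp.1 x zy
  obtain ⟨U, hU⟩ := hhyp.1 zy zx
  have hTC := hhyp.closeTo_of_triangle hT hU hσx
    (closeTo_zero_of_subset (hU.subset_geoConv_inl hhyp.1 hzy hzx)) (closeTo_zero_of_subset hσxC)
  have hsC := hhyp.closeTo_of_triangle hs hσy hT ((closeTo_zero_of_subset hσyC).mono hδ)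
    (hTC.mono (by linarith))
  exact (hsC.mono (by linarith)) p hp

lemma smallDispSet_subset_ZSet {G : Type*} [Group G] [MulAction G X] (hsg : StronglyGeodesic X)
    (δ : ℝ) (V : Subgroup G) : smallDispSet X δ V ⊆ ZSet X δ V := by
  intro e he
  set A := Sum.inr '' limitSet X V ∪ Sum.inl '' smallDispSet X δ V
  have heA : Sum.inl e ∈ A := Or.inr ⟨e, he, rfl⟩
  by_cases hA : ∀ a ∈ A, a = Sum.inl e
  · exact Or.inl ⟨e, Set.eq_singleton_iff_unique_mem.2 ⟨heA, hA⟩, rfl⟩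
  push Not at hA
  obtain ⟨a, ha, hae⟩ := hA
  refine Or.inr ⟨Sum.inl e, heA, a, ha, hae.symm, ?_⟩
  match a with
  | Sum.inl e' =>
    obtain ⟨s, hs⟩ := hsg.1 e e'
    exact ⟨s, hs, hs.left_mem⟩
  | Sum.inr P =>
    obtain ⟨γ₀, rfl⟩ := Quot.exists_rep P
    obtain ⟨γ, hγ, h0, hasym⟩ := hsg.2.1 γ₀.1 γ₀.2 e
    exact ⟨γ '' Set.Ici 0, ⟨γ, h0, ⟨hγ, Quotient.sound (asymptotic_symm hasym)⟩, rfl⟩,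
      ⟨0, Set.self_mem_Ici, h0⟩⟩

end Hull

section Invariance

variable {G X : Type*} [Group G] [MetricSpace X] [MulAction G X] {V : Subgroup G} {v : G}
  {δ : ℝ}

/-- `Conv(Z(V))`, whose closure is the convex hull `X(V)`. -/
def convZ (X : Type*) [MetricSpace X] [MulAction G X] (δ : ℝ) (V : Subgroup G) : Set X :=
  geoConv (Sum.inl '' ZSet X δ V)

lemma mapsTo_smul_geoConv (hiso : IsometricAction G X) {A : Set (X ⊕ Boundary X)}
    (hA : ∀ v ∈ V, MapsTo (extSmul hiso v) A A) (hv : v ∈ V) :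
    MapsTo (v • ·) (geoConv A) (geoConv A) := by
  have himage : extSmul hiso v '' A = A := SurjOn.image_eq_of_mapsTo
    (fun a ha => ⟨_, hA _ (inv_mem hv) ha,
      by simpa only [inv_inv] using extSmul_inv_smul hiso v⁻¹ a⟩)
    (hA v hv)
  intro x hx
  simpa only [himage] using smul_mem_geoConv hiso v hx

lemma mapsTo_limitSet (hiso : IsometricAction G X) (hv : v ∈ V) :
    MapsTo (Boundary.smul hiso v) (limitSet X V) (limitSet X V) := by
  rintro p ⟨x₀, u, hconv⟩
  refine ⟨v • x₀, fun n => ⟨v * u n * v⁻¹, mul_mem (mul_mem hv (u n).2) (inv_mem hv)⟩, ?_⟩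
  convert hconv.smul hiso v using 2 with n
  rw [smul_smul, inv_mul_cancel_right, mul_smul]

lemma mapsTo_smallDispSet (hiso : IsometricAction G X) (hv : v ∈ V) :
    MapsTo (v • ·) (smallDispSet X δ V) (smallDispSet X δ V) := by
  rintro x ⟨u, hu, hu1, hd⟩
  refine ⟨v * u * v⁻¹, mul_mem (mul_mem hv hu) (inv_mem hv), by simpa using hu1, ?_⟩
  rwa [smul_smul, inv_mul_cancel_right, mul_smul, hiso]

lemma mapsTo_ZSet (hiso : IsometricAction G X) (hv : v ∈ V) :
    MapsTo (v • ·) (ZSet X δ V) (ZSet X δ V) := by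
  refine mapsTo_smul_geoConv hiso (fun u hu => ?_) hv
  rintro _ (⟨p, hp, rfl⟩ | ⟨x, hx, rfl⟩)
  · exact Or.inl ⟨_, mapsTo_limitSet hiso hu hp, rfl⟩
  · exact Or.inr ⟨_, mapsTo_smallDispSet hiso hu hx, rfl⟩

lemma mapsTo_convZ (hiso : IsometricAction G X) (hv : v ∈ V) :
    MapsTo (v • ·) (convZ X δ V) (convZ X δ V) := by
  refine mapsTo_smul_geoConv hiso (fun u hu => ?_) hv
  rintro _ ⟨x, hx, rfl⟩
  exact ⟨_, mapsTo_ZSet hiso hu hx, rfl⟩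

lemma mapsTo_cHull (hiso : IsometricAction G X) (hv : v ∈ V) :
    MapsTo (v • ·) (cHull X δ V) (cHull X δ V) :=
  (mapsTo_convZ hiso hv).closure (hiso.isometry v).continuous

end Invariance

section TranslationDistance

variable {G X : Type*} [Group G] [MetricSpace X] [MulAction G X] {V : Subgroup G} {δ : ℝ}
  {A B : Set X} {p q : X}

lemma setDist_le_dist {a b : X} (ha : a ∈ A) (hb : b ∈ B) : setDist A B ≤ dist a b :=
  csInf_le ⟨0, by rintro _ ⟨x, -, y, -, rfl⟩; exact dist_nonneg⟩ (Set.mem_image2_of_mem ha hb)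

lemma exists_dist_lt_setDist_add (hA : A.Nonempty) (hB : B.Nonempty) {ε : ℝ} (hε : 0 < ε) :
    ∃ a ∈ A, ∃ b ∈ B, dist a b < setDist A B + ε := by
  obtain ⟨_, ⟨a, ha, b, hb, rfl⟩, hlt⟩ :=
    exists_lt_of_csInf_lt (hA.image2 hB) (lt_add_of_pos_right (setDist A B) hε)
  exact ⟨a, ha, b, hb, hlt⟩

lemma lV_le_dist (hp : p ∈ cHull X δ V) (hq : q ∈ cHull X δ V) (g : G) :
    lV X δ V g ≤ dist p (g • q) :=
  setDist_le_dist hp (Set.smul_mem_smul_set hq)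

lemma lV_le_dist_smul_mul (hiso : IsometricAction G X) {u : G} (hu : u ∈ V)
    (hp : p ∈ cHull X δ V) (hq : q ∈ cHull X δ V) (g₁ g₂ : G) :
    lV X δ V g₂ ≤ dist (g₁ • p) ((g₁ * u * g₂) • q) := by
  have h := lV_le_dist (mapsTo_cHull hiso (inv_mem hu) hp) hq g₂
  rwa [← hiso u, smul_inv_smul, ← hiso g₁, ← mul_smul, ← mul_smul] at h

lemma cHull_nonempty_of_lV_ne_zero {g : G} (h : lV X δ V g ≠ 0) : (cHull X δ V).Nonempty := by
  by_contra hY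
  rw [Set.not_nonempty_iff_eq_empty] at hY
  exact h (by simp [lV, setDist, hY])

lemma exists_pair_dist_le_lV_add_one (hiso : IsometricAction G X) (hY : (cHull X δ V).Nonempty)
    (g : G) : ∃ p ∈ convZ X δ V, ∃ q ∈ convZ X δ V, dist p (g • q) ≤ lV X δ V g + 1 := by
  obtain ⟨p₀, hp₀, _, ⟨q₀, hq₀, rfl⟩, hd⟩ :=
    exists_dist_lt_setDist_add hY (hY.smul_set (a := g)) (show (0 : ℝ) < 1 / 2 by norm_num)
  obtain ⟨p, hp, hpp₀⟩ := Metric.mem_closure_iff.1 hp₀ (1 / 4) (by norm_num)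
  obtain ⟨q, hq, hqq₀⟩ := Metric.mem_closure_iff.1 hq₀ (1 / 4) (by norm_num)
  refine ⟨p, hp, q, hq, ?_⟩
  have : dist p₀ (g • q₀) < lV X δ V g + 1 / 2 := hd
  linarith [dist_triangle4 p p₀ (g • q₀) (g • q), hiso g q₀ q, dist_comm p p₀]

end TranslationDistance

section ShortProducts

variable {G X : Type*} [Group G] [MetricSpace X] [MulAction G X] {V : Subgroup G} {δ : ℝ}
  {g₁ g₂ u : G} {y₁ yh b₀ bh₀ x : X} {α β : ℝ → X} {L₁ L₂ t : ℝ}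

namespace GeodParam

lemma lV_sub_le_dist (hα : GeodParam α L₁ y₁ (g₁ • yh)) (hyh : yh ∈ cHull X δ V)
    (ht : t ∈ Icc 0 L₁) (hx : x ∈ cHull X δ V) : lV X δ V g₁ - (L₁ - t) ≤ dist (α t) x := by
  linarith [lV_le_dist hx hyh g₁, hα.dist_right ht, dist_triangle x (α t) (g₁ • yh),
    dist_comm x (α t)]

lemma lV_sub_le_dist_smul (hα : GeodParam α L₁ y₁ (g₁ • yh)) (hy₁ : y₁ ∈ cHull X δ V)
    (ht : t ∈ Icc 0 L₁) (hx : x ∈ cHull X δ V) : lV X δ V g₁ - t ≤ dist (α t) (g₁ • x) := by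
  linarith [lV_le_dist hy₁ hx g₁, hα.dist_left ht, dist_triangle y₁ (α t) (g₁ • x),
    dist_comm y₁ (α t)]

lemma lV_sub_le_dist_smul_mul (hiso : IsometricAction G X) (hα : GeodParam α L₁ y₁ (g₁ • yh))
    (hyh : yh ∈ cHull X δ V) (ht : t ∈ Icc 0 L₁) (hu : u ∈ V) (hx : x ∈ cHull X δ V) :
    lV X δ V g₂ - (L₁ - t) ≤ dist (α t) ((g₁ * u * g₂) • x) := by
  linarith [lV_le_dist_smul_mul hiso hu hyh hx g₁ g₂, hα.dist_right ht,
    dist_triangle (g₁ • yh) (α t) ((g₁ * u * g₂) • x), dist_comm (g₁ • yh) (α t)]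

end GeodParam

/-- The hexagon `α`, `σ`, `g₁ u β`, `τ`, `ρ`, `π` is `4`-thin, and every side but `g₁ u β` stays
farther than `4` from `α (L₁ - 50)`: `σ`, `τ`, `π` run within `2` of `g₁ X(V)`, `g₁ u g₂ X(V)`,
`X(V)`, and `ρ`, a short bridge for `g₁ u g₂`, passes far from the end `g₁ • yh` of `α`. -/
lemma exists_near_smul_bridge (hiso : IsometricAction G X) (hhyp : DeltaHyperbolic 1 X)
    (hu : u ∈ V) (hy₁ : y₁ ∈ convZ X 1 V) (hyh : yh ∈ convZ X 1 V) (hb₀ : b₀ ∈ convZ X 1 V)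
    (hbh₀ : bh₀ ∈ convZ X 1 V) (hα : GeodParam α L₁ y₁ (g₁ • yh))
    (hβ : GeodParam β L₂ b₀ (g₂ • bh₀)) (hL₁ : L₁ ≤ lV X 1 V g₁ + 1)
    (h₁ : 100 ≤ lV X 1 V g₁) (h₂ : 100 ≤ lV X 1 V g₂)
    (hshort : lV X 1 V (g₁ * u * g₂) ≤ lV X 1 V g₁ + lV X 1 V g₂ - 200) :
    ∃ s ∈ Icc 0 L₂, dist (α (L₁ - 50)) ((g₁ * u) • β s) ≤ 4 := by
  set C := convZ X 1 V
  set g := g₁ * u * g₂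
  have hCY : C ⊆ cHull X 1 V := subset_closure
  have hL₁' : lV X 1 V g₁ ≤ L₁ := hα.dist_eq ▸ lV_le_dist (hCY hy₁) (hCY hyh) g₁
  have ht : L₁ - 50 ∈ Icc 0 L₁ := ⟨by linarith, by linarith⟩
  have hqc : Quasiconvex (2 * 1) C := quasiconvex_geoConv_inl hhyp _
  obtain ⟨a, ha, bh, hbh, hab⟩ := exists_pair_dist_le_lV_add_one hiso ⟨y₁, hCY hy₁⟩ g
  obtain ⟨σ, hσ⟩ := hhyp.1 (g₁ • yh) ((g₁ * u) • b₀)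
  obtain ⟨τ, hτ⟩ := hhyp.1 ((g₁ * u) • g₂ • bh₀) (g • bh)
  obtain ⟨ρ, hρ⟩ := hhyp.1 (g • bh) a
  obtain ⟨π, hπ⟩ := hhyp.1 y₁ a
  obtain ⟨q, hq, hmq⟩ := hhyp.closeTo_of_hexagon hα.isGeodesicSegment hσ
    (hβ.smul hiso (g₁ * u)).isGeodesicSegment hτ hρ hπ (α (L₁ - 50)) ⟨_, ht, rfl⟩
  rcases hq with (((hqσ | ⟨s, hs, rfl⟩) | hqτ) | hqρ) | hqπ
  · have hσC : CloseTo (2 * 1) σ (g₁ • C) := hqc.smul hiso g₁ _ (smul_mem_smul_set hyh) _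
      (by rw [mul_smul]; exact smul_mem_smul_set (mapsTo_convZ hiso hu hb₀)) σ hσ
    have hfar : ∀ e ∈ g₁ • C, 49 ≤ dist (α (L₁ - 50)) e := by
      rintro _ ⟨x, hx, rfl⟩
      linarith [hα.lV_sub_le_dist_smul (hCY hy₁) ht (hCY hx)]
    linarith [hσC.sub_le_dist hfar hqσ]
  · exact ⟨s, hs, by simpa using hmq⟩
  · have hτC : CloseTo (2 * 1) τ (g • C) := hqc.smul hiso g _
      (by rw [← mul_smul]; exact smul_mem_smul_set hbh₀) _
      (smul_mem_smul_set hbh) τ hτ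
    have hfar : ∀ e ∈ g • C, lV X 1 V g₂ - 50 ≤ dist (α (L₁ - 50)) e := by
      rintro _ ⟨x, hx, rfl⟩
      linarith [hα.lV_sub_le_dist_smul_mul hiso (hCY hyh) ht hu (hCY hx) (g₂ := g₂)]
    linarith [hτC.sub_le_dist hfar hqτ]
  · have hfar := hρ.gromov_le_dist hqρ (g₁ • yh)
    unfold gromov at hfar
    linarith [lV_le_dist (hCY ha) (hCY hyh) g₁,
      lV_le_dist_smul_mul hiso hu (hCY hyh) (hCY hbh) g₁ g₂,
      dist_comm (g • bh) (g₁ • yh), dist_comm (g • bh) a, dist_comm a (g₁ • yh),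
      hα.dist_right ht, dist_triangle (g₁ • yh) (α (L₁ - 50)) q, dist_comm (g₁ • yh) (α (L₁ - 50))]
  · have hfar : ∀ e ∈ C, 50 ≤ dist (α (L₁ - 50)) e := fun x hx => by
      linarith [hα.lV_sub_le_dist (hCY hyh) ht (hCY hx)]
    linarith [CloseTo.sub_le_dist (hqc y₁ hy₁ a ha π hπ) hfar hqπ]

lemma dist_smul_bridge_le (hiso : IsometricAction G X) (hhyp : DeltaHyperbolic 1 X)
    (hu : u ∈ V) (hy₁ : y₁ ∈ convZ X 1 V) (hyh : yh ∈ convZ X 1 V) (hb₀ : b₀ ∈ convZ X 1 V)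
    (hbh₀ : bh₀ ∈ convZ X 1 V) (hα : GeodParam α L₁ y₁ (g₁ • yh))
    (hβ : GeodParam β L₂ b₀ (g₂ • bh₀)) (hL₁ : L₁ ≤ lV X 1 V g₁ + 1)
    (hL₂ : L₂ ≤ lV X 1 V g₂ + 1) (h₁ : 100 ≤ lV X 1 V g₁) (h₂ : 100 ≤ lV X 1 V g₂)
    (hshort : lV X 1 V (g₁ * u * g₂) ≤ lV X 1 V g₁ + lV X 1 V g₂ - 200) :
    dist ((g₁ * u) • β 50) (α (L₁ - 50)) ≤ 9 := by
  obtain ⟨s, hs, hsm⟩ :=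
    exists_near_smul_bridge hiso hhyp hu hy₁ hyh hb₀ hbh₀ hα hβ hL₁ h₁ h₂ hshort
  have hCY : convZ X 1 V ⊆ cHull X 1 V := subset_closure
  have hL₁' : lV X 1 V g₁ ≤ L₁ := hα.dist_eq ▸ lV_le_dist (hCY hy₁) (hCY hyh) g₁
  have hL₂' : lV X 1 V g₂ ≤ L₂ := hβ.dist_eq ▸ lV_le_dist (hCY hb₀) (hCY hbh₀) g₂
  have ht : L₁ - 50 ∈ Icc 0 L₁ := ⟨by linarith, by linarith⟩
  have h50 : (50 : ℝ) ∈ Icc 0 L₂ := ⟨by norm_num, by linarith⟩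
  have hβ' := hβ.smul hiso (g₁ * u)
  have hfar₀ : 49 ≤ dist (α (L₁ - 50)) ((g₁ * u) • b₀) := by
    rw [mul_smul]
    linarith [hα.lV_sub_le_dist_smul (hCY hy₁) ht (hCY (mapsTo_convZ hiso hu hb₀))]
  have hfar₁ : lV X 1 V g₂ - 50 ≤ dist (α (L₁ - 50)) ((g₁ * u) • g₂ • bh₀) := by
    rw [← mul_smul]
    linarith [hα.lV_sub_le_dist_smul_mul hiso (hCY hyh) ht hu (hCY hbh₀) (g₂ := g₂)]
  have hs₀ : 45 ≤ s := by
    linarith [hβ'.dist_left hs, dist_triangle (α (L₁ - 50)) ((g₁ * u) • β s) ((g₁ * u) • b₀)]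
  have hs₁ : s ≤ 55 := by
    linarith [hβ'.dist_right hs,
      dist_triangle (α (L₁ - 50)) ((g₁ * u) • β s) ((g₁ * u) • g₂ • bh₀)]
  calc dist ((g₁ * u) • β 50) (α (L₁ - 50))
      ≤ dist ((g₁ * u) • β 50) ((g₁ * u) • β s) + dist ((g₁ * u) • β s) (α (L₁ - 50)) :=
        dist_triangle _ _ _
    _ = |50 - s| + dist (α (L₁ - 50)) ((g₁ * u) • β s) := by
        rw [hβ'.2.2.2 50 h50 s hs, dist_comm]
    _ ≤ 5 + 4 := add_le_add (abs_le.2 ⟨by linarith, by linarith⟩) hsm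
    _ = 9 := by norm_num

end ShortProducts

theorem statement16_general {G : Type u} {X : Type v} [Group G] [MetricSpace X] [MulAction G X]
    (hiso : IsometricAction G X) (hsg : StronglyGeodesic X) (hhyp : DeltaHyperbolic 1 X)
    (V : Subgroup G) (g₁ g₂ : G)
    (h₁ : 100 ≤ lV X 1 V g₁) (h₂ : 100 ≤ lV X 1 V g₂) :
    ∀ v w : G, v ∈ V → w ∈ V →
      lV X 1 V (g₁ * v * g₂) ≤ lV X 1 V g₁ + lV X 1 V g₂ - 200 →
      lV X 1 V (g₁ * w * g₂) ≤ lV X 1 V g₁ + lV X 1 V g₂ - 200 →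
      v = w := by
  intro v w hv hw hvshort hwshort
  have hY : (cHull X 1 V).Nonempty := cHull_nonempty_of_lV_ne_zero (g := g₁) (by linarith)
  obtain ⟨y₁, hy₁, yh, hyh, hd₁⟩ := exists_pair_dist_le_lV_add_one hiso hY g₁
  obtain ⟨b₀, hb₀, bh₀, hbh₀, hd₂⟩ := exists_pair_dist_le_lV_add_one hiso hY g₂
  obtain ⟨α, hα⟩ := hhyp.1.exists_geodParam y₁ (g₁ • yh)
  obtain ⟨β, hβ⟩ := hhyp.1.exists_geodParam b₀ (g₂ • bh₀)
  have key := fun u (hu : u ∈ V) =>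
    dist_smul_bridge_le hiso hhyp hu hy₁ hyh hb₀ hbh₀ hα hβ hd₁ hd₂ h₁ h₂
  have hdisp : dist (β 50) ((v⁻¹ * w) • β 50) ≤ 100 * 1 := by
    rw [← hiso (g₁ * v), ← mul_smul, mul_assoc, mul_inv_cancel_left]
    linarith [key v hv hvshort, key w hw hwshort,
      dist_triangle_right ((g₁ * v) • β 50) ((g₁ * w) • β 50) (α (dist y₁ (g₁ • yh) - 50))]
  by_contra hvw
  have hE : β 50 ∈ smallDispSet X 1 V :=
    ⟨v⁻¹ * w, mul_mem (inv_mem hv) hw, fun h => hvw (inv_mul_eq_one.1 h), hdisp⟩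
  have hβC : β 50 ∈ cHull X 1 V :=
    subset_closure (subset_geoConv_inl hhyp.1 _ (smallDispSet_subset_ZSet hsg 1 V hE))
  have hfar := lV_le_dist hβC (subset_closure hbh₀) g₂
  have hβlen := lV_le_dist (subset_closure hb₀) (subset_closure hbh₀) g₂
  rw [hβ.dist_right ⟨by norm_num, by linarith⟩] at hfar
  linarith

theorem statement16 {G : Type u} {X : Type v} [Group G] [MetricSpace X] [MulAction G X]
    (hiso : IsometricAction G X) (hsg : StronglyGeodesic X) (hhyp : DeltaHyperbolic 1 X)
    (V : Subgroup G) (hV : V ≠ ⊥) (g₁ g₂ : G)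
    (h₁ : 100 ≤ lV X 1 V g₁) (h₂ : 100 ≤ lV X 1 V g₂) :
    ∀ v w : G, v ∈ V → w ∈ V →
      lV X 1 V (g₁ * v * g₂) ≤ lV X 1 V g₁ + lV X 1 V g₂ - 200 →
      lV X 1 V (g₁ * w * g₂) ≤ lV X 1 V g₁ + lV X 1 V g₂ - 200 →
      v = w :=
  statement16_general hiso hsg hhyp V g₁ g₂ h₁ h₂

end KW
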